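/- arXiv:2305.04255 — 3 statements merged into one kernel-verified Lean document; each statement's English description precedes it below -/
import Mathlib

section
/- If g : [0,∞) → ℝ is continuous, increasing with g(0) = g₀ > 0 and t ↦ g(t)/t is nonincreasing on (0,∞), then the function t ↦ (1/2)G(t) − (1/4)g(t)·t is nondecreasing and positive for t > 0, where G(t) = ∫₀ᵗ g(s) ds. -/
theorem half_G_sub_quarter_gt_monotone_pos (g : ℝ → ℝ) (g₀ : ℝ)
    (hcont : ContinuousOn g (Set.Ici 0))
    (hmono : StrictMonoOn g (Set.Ici 0))
    (hg0 : g 0 = g₀) (hg0pos : 0 < g₀)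
    (hquot : ∀ s t : ℝ, 0 < s → s ≤ t → g t / t ≤ g s / s)
    (G : ℝ → ℝ) (hG : ∀ t, G t = ∫ s in (0:ℝ)..t, g s) :
    (∀ s t : ℝ, 0 < s → s ≤ t →
        (1/2) * G s - (1/4) * g s * s ≤ (1/2) * G t - (1/4) * g t * t) ∧
    (∀ t : ℝ, 0 < t → 0 < (1/2) * G t - (1/4) * g t * t) := by
  -- integrability of g on subintervals of [0,∞)
  have hint : ∀ p q : ℝ, 0 ≤ p → p ≤ q → IntervalIntegrable g MeasureTheory.volume p q := by
    intro p q hp hpq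
    apply ContinuousOn.intervalIntegrable
    apply hcont.mono
    rw [Set.uIcc_of_le hpq]
    intro x hx
    exact le_trans hp hx.1
  have hmonole := hmono.monotoneOn
  constructor
  · intro s t hs hst
    have ht : 0 < t := lt_of_lt_of_le hs hst
    set a := g s with ha_def
    set b := g t with hb_def
    have ha : 0 < a := by
      have := hmono (Set.self_mem_Ici) (le_of_lt hs : (0:ℝ) ≤ s) hs
      rw [hg0] at this; linarith
    have hab : a ≤ b := hmonole (le_of_lt hs) (le_of_lt ht) hst
    have hb : 0 < b := lt_of_lt_of_le ha hab
    have hbs : b * s ≤ a * t := by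
      have := hquot s t hs hst
      exact (div_le_div_iff₀ ht hs).mp this
    set u := t * a / b with hu_def
    have hub : u * b = t * a := div_mul_cancel₀ _ (ne_of_gt hb)
    have hsu : s ≤ u := by
      rw [hu_def, le_div_iff₀ hb]; linarith
    have hut : u ≤ t := by
      rw [hu_def, div_le_iff₀ hb]; nlinarith
    have hu0 : 0 < u := lt_of_lt_of_le hs hsu
    -- first bound
    have I1 : a * (u - s) ≤ ∫ x in s..u, g x := by
      have : ∫ x in s..u, a = a * (u - s) := by
        simp [intervalIntegral.integral_const]; ring
      rw [← this]
      apply intervalIntegral.integral_mono_on hsu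
      · exact intervalIntegrable_const
      · exact hint s u (le_of_lt hs) hsu
      · intro x hx
        exact hmonole (le_of_lt hs) (le_trans (le_of_lt hs) hx.1) hx.1
    -- second bound
    have I2 : b / t * ((t ^ 2 - u ^ 2) / 2) ≤ ∫ x in u..t, g x := by
      have heq : ∫ x in u..t, b / t * x = b / t * ((t ^ 2 - u ^ 2) / 2) := by
        rw [intervalIntegral.integral_const_mul, integral_id]
      rw [← heq]
      apply intervalIntegral.integral_mono_on hut
      · exact (continuous_const.mul continuous_id).intervalIntegrable u t
      · exact hint u t (le_of_lt hu0) hut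
      · intro x hx
        have hx0 : 0 < x := lt_of_lt_of_le hu0 hx.1
        have := hquot x t hx0 hx.2
        calc b / t * x ≤ g x / x * x := by
              apply mul_le_mul_of_nonneg_right this (le_of_lt hx0)
            _ = g x := div_mul_cancel₀ _ (ne_of_gt hx0)
    have hsplit : G t - G s = ∫ x in s..t, g x := by
      rw [hG t, hG s]
      rw [← intervalIntegral.integral_add_adjacent_intervals
        (hint 0 s (le_refl 0) (le_of_lt hs)) (hint s t (le_of_lt hs) hst)]
      ring
    have hadd : (∫ x in s..u, g x) + ∫ x in u..t, g x = ∫ x in s..t, g x :=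
      intervalIntegral.integral_add_adjacent_intervals
        (hint s u (le_of_lt hs) hsu) (hint u t (le_of_lt hu0) hut)
    have key : a * (u - s) + b / t * ((t ^ 2 - u ^ 2) / 2) ≤ G t - G s := by
      rw [hsplit, ← hadd]; linarith
    have hbt : b / t * ((t ^ 2 - u ^ 2) / 2) = (b * t ^ 2 - b * u ^ 2) / (2 * t) := by
      field_simp
    rw [hbt] at key
    -- clear denominator: b*u^2 = u*(u*b) = u*t*a
    have hbu2 : b * u ^ 2 = u * t * a := by nlinarith [hub]
    rw [hbu2] at key
    have hkey2 : (b * t ^ 2 - u * t * a) / (2 * t) = (b * t - u * a) / 2 := by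
      field_simp
    rw [hkey2] at key
    have hnn := mul_nonneg (le_of_lt ha) (sub_nonneg.mpr hsu)
    linarith
  · intro t ht
    set b := g t with hb_def
    have hb0 : g₀ < b := by
      have := hmono (Set.self_mem_Ici) (le_of_lt ht : (0:ℝ) ≤ t) ht
      rw [hg0] at this; exact this
    have hb : 0 < b := lt_trans hg0pos hb0
    set c := t * g₀ / b with hc_def
    have hcb : c * b = t * g₀ := div_mul_cancel₀ _ (ne_of_gt hb)
    have hc0 : 0 < c := div_pos (mul_pos ht hg0pos) hb
    have hct : c ≤ t := by
      rw [hc_def, div_le_iff₀ hb]; nlinarith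
    have I1 : g₀ * c ≤ ∫ x in (0:ℝ)..c, g x := by
      have : ∫ x in (0:ℝ)..c, g₀ = g₀ * c := by
        simp [intervalIntegral.integral_const]; ring
      rw [← this]
      apply intervalIntegral.integral_mono_on (le_of_lt hc0)
      · exact intervalIntegrable_const
      · exact hint 0 c (le_refl 0) (le_of_lt hc0)
      · intro x hx
        have := hmonole (Set.self_mem_Ici) hx.1 hx.1
        rw [hg0] at this; exact this
    have I2 : b / t * ((t ^ 2 - c ^ 2) / 2) ≤ ∫ x in c..t, g x := by
      have heq : ∫ x in c..t, b / t * x = b / t * ((t ^ 2 - c ^ 2) / 2) := by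
        rw [intervalIntegral.integral_const_mul, integral_id]
      rw [← heq]
      apply intervalIntegral.integral_mono_on hct
      · exact (continuous_const.mul continuous_id).intervalIntegrable c t
      · exact hint c t (le_of_lt hc0) hct
      · intro x hx
        have hx0 : 0 < x := lt_of_lt_of_le hc0 hx.1
        have := hquot x t hx0 hx.2
        calc b / t * x ≤ g x / x * x := by
              apply mul_le_mul_of_nonneg_right this (le_of_lt hx0)
            _ = g x := div_mul_cancel₀ _ (ne_of_gt hx0)
    have hadd : (∫ x in (0:ℝ)..c, g x) + ∫ x in c..t, g x = ∫ x in (0:ℝ)..t, g x :=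
      intervalIntegral.integral_add_adjacent_intervals
        (hint 0 c (le_refl 0) (le_of_lt hc0)) (hint c t (le_of_lt hc0) hct)
    have key : g₀ * c + b / t * ((t ^ 2 - c ^ 2) / 2) ≤ G t := by
      rw [hG t, ← hadd]; linarith
    have hbt : b / t * ((t ^ 2 - c ^ 2) / 2) = (b * t ^ 2 - b * c ^ 2) / (2 * t) := by
      field_simp
    rw [hbt] at key
    have hbc2 : b * c ^ 2 = c * t * g₀ := by nlinarith [hcb]
    rw [hbc2] at key
    have hkey2 : (b * t ^ 2 - c * t * g₀) / (2 * t) = (b * t - c * g₀) / 2 := by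
      field_simp
    rw [hkey2] at key
    have hpos := mul_pos hg0pos hc0
    linarith
end

section
/- If g : [0,∞) → ℝ is continuous, increasing with g(0) = g₀ > 0 and t ↦ g(t)/t is nonincreasing on (0,∞), then for every q ≥ 4 the function t ↦ (1/2)G(t) − (1/q)g(t)·t is nondecreasing and positive for t > 0, where G(t) = ∫₀ᵗ g(s) ds. -/
private lemma lin_le_integral {g : ℝ → ℝ} {a b c : ℝ} (hab : a ≤ b)
    (hint : IntervalIntegrable g MeasureTheory.volume a b)
    (hle : ∀ u ∈ Set.Icc a b, c * u ≤ g u) :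
    c * ((b^2 - a^2)/2) ≤ ∫ u in a..b, g u := by
  have h1 : (∫ u in a..b, c * u) ≤ ∫ u in a..b, g u := by
    apply intervalIntegral.integral_mono_on hab _ hint hle
    exact (continuous_const.mul continuous_id).intervalIntegrable a b
  calc c * ((b^2 - a^2)/2) = ∫ u in a..b, c * u := by
        rw [intervalIntegral.integral_const_mul, integral_id]
    _ ≤ _ := h1

theorem half_G_sub_inv_q_gt_monotone_pos (g : ℝ → ℝ) (g₀ : ℝ)
    (hcont : ContinuousOn g (Set.Ici 0))
    (hmono : StrictMonoOn g (Set.Ici 0))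
    (hg0 : g 0 = g₀) (hg0pos : 0 < g₀)
    (hquot : ∀ s t : ℝ, 0 < s → s ≤ t → g t / t ≤ g s / s)
    (G : ℝ → ℝ) (hG : ∀ t, G t = ∫ s in (0:ℝ)..t, g s) :
    ∀ q : ℝ, 4 ≤ q →
      (∀ s t : ℝ, 0 < s → s ≤ t →
          (1/2) * G s - (1/q) * g s * s ≤ (1/2) * G t - (1/q) * g t * t) ∧
      (∀ t : ℝ, 0 < t → 0 < (1/2) * G t - (1/q) * g t * t) := by
  have hqpos : ∀ q : ℝ, 4 ≤ q → (0:ℝ) < q := fun q hq => by linarith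
  have hint : ∀ a b : ℝ, 0 ≤ a → a ≤ b →
      IntervalIntegrable g MeasureTheory.volume a b := by
    intro a b ha hab
    apply ContinuousOn.intervalIntegrable
    apply hcont.mono
    rw [Set.uIcc_of_le hab]
    intro x hx
    exact le_trans ha hx.1
  -- g is positive on [0,∞)
  have hgpos : ∀ t : ℝ, 0 ≤ t → 0 < g t := by
    intro t ht
    have := hmono.monotoneOn (Set.self_mem_Ici) ht ht
    rw [hg0] at this; linarith
  -- pointwise lower bound g u ≥ (g t / t) * u on [0, t]
  have hptw : ∀ t : ℝ, 0 < t → ∀ u ∈ Set.Icc (0:ℝ) t, (g t / t) * u ≤ g u := by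
    intro t ht u hu
    rcases eq_or_lt_of_le hu.1 with h | h
    · subst h; simp; linarith [hgpos 0 le_rfl]
    · have hq := hquot u t h hu.2
      have : (g t / t) * u ≤ (g u / u) * u := by
        apply mul_le_mul_of_nonneg_right hq (le_of_lt h)
      rwa [div_mul_cancel₀ _ (ne_of_gt h)] at this
  refine fun q hq => ⟨?_, ?_⟩
  · -- monotonicity
    intro s t hs hst
    have ht : 0 < t := lt_of_lt_of_le hs hst
    have hsplit : (∫ u in (0:ℝ)..s, g u) + (∫ u in s..t, g u) = ∫ u in (0:ℝ)..t, g u :=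
      intervalIntegral.integral_add_adjacent_intervals
        (hint 0 s le_rfl hs.le) (hint s t hs.le hst)
    have hI : (g t / t) * ((t^2 - s^2)/2) ≤ ∫ u in s..t, g u := by
      apply lin_le_integral hst (hint s t hs.le hst)
      intro u hu
      exact hptw t ht u ⟨le_trans hs.le hu.1, hu.2⟩
    -- g t * t - g s * s ≤ (g t / t) * (t^2 - s^2)
    have hgs : (g t / t) * s ≤ g s := hptw t ht s ⟨hs.le, hst⟩
    have hdiff : g t * t - g s * s ≤ (g t / t) * (t^2 - s^2) := by
      have h1 : (g t / t) * t = g t := div_mul_cancel₀ _ (ne_of_gt ht)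
      nlinarith [mul_le_mul_of_nonneg_right hgs hs.le]
    have hnn : 0 ≤ (g t / t) * (t^2 - s^2) := by
      apply mul_nonneg (le_of_lt (div_pos (hgpos t ht.le) ht))
      nlinarith
    have hq4 : (1/q) * (g t * t - g s * s) ≤ (1/4) * ((g t / t) * (t^2 - s^2)) := by
      have h1 : (1/q) * (g t * t - g s * s) ≤ (1/q) * ((g t / t) * (t^2 - s^2)) := by
        apply mul_le_mul_of_nonneg_left hdiff
        positivity
      have h2 : (1/q : ℝ) ≤ 1/4 := by
        rw [div_le_div_iff₀ (hqpos q hq) (by norm_num)]; linarith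
      nlinarith
    have hGdiff : G t - G s = ∫ u in s..t, g u := by
      rw [hG t, hG s, ← hsplit]; ring
    nlinarith [hI]
  · -- positivity
    intro t ht
    have hgt : 0 < g t := hgpos t ht.le
    have hg0t : g₀ < g t := by
      have := hmono Set.self_mem_Ici (le_of_lt ht) ht
      rwa [hg0] at this
    set ε : ℝ := g₀ * t / (2 * g t) with hε
    have hεpos : 0 < ε := by positivity
    have hεt : ε ≤ t := by
      rw [hε, div_le_iff₀ (by positivity)]
      nlinarith
    -- lower bound on [0, ε] by constant g₀
    have h1 : ε * g₀ ≤ ∫ u in (0:ℝ)..ε, g u := by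
      have := intervalIntegral.integral_mono_on (le_of_lt hεpos)
        (_root_.intervalIntegrable_const (c := g₀)) (hint 0 ε le_rfl hεpos.le)
        (fun u hu => by
          have := hmono.monotoneOn Set.self_mem_Ici hu.1 hu.1
          rw [hg0] at this; exact this)
      simpa [smul_eq_mul, mul_comm] using this
    -- lower bound on [ε, t]
    have h2 : (g t / t) * ((t^2 - ε^2)/2) ≤ ∫ u in ε..t, g u := by
      apply lin_le_integral hεt (hint ε t hεpos.le hεt)
      intro u hu
      exact hptw t ht u ⟨le_trans hεpos.le hu.1, hu.2⟩
    have hsplit : (∫ u in (0:ℝ)..ε, g u) + (∫ u in ε..t, g u) = ∫ u in (0:ℝ)..t, g u :=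
      intervalIntegral.integral_add_adjacent_intervals
        (hint 0 ε le_rfl hεpos.le) (hint ε t hεpos.le hεt)
    have hGlb : ε * g₀ + (g t / t) * ((t^2 - ε^2)/2) ≤ G t := by
      rw [hG t, ← hsplit]; exact add_le_add h1 h2
    -- (1/q) * g t * t ≤ (1/4) * g t * t
    have hq4 : (1/q) * g t * t ≤ (1/4) * g t * t := by
      have h2 : (1/q : ℝ) ≤ 1/4 := by
        rw [div_le_div_iff₀ (hqpos q hq) (by norm_num)]; linarith
      nlinarith [mul_pos hgt ht]
    -- key: (1/2)(ε g₀ + (g t/t)(t²-ε²)/2) - (1/4) g t t = ε g₀/2 - (g t) ε²/(4t) = 3εg₀/8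
    have hkey : (1/2) * (ε * g₀ + (g t / t) * ((t^2 - ε^2)/2)) - (1/4) * g t * t
        = ε * g₀ / 2 - (g t / t) * ε^2 / 4 := by
      field_simp
      ring
    have hε2 : (g t / t) * ε^2 / 4 = ε * g₀ / 8 := by
      rw [hε]
      field_simp
      ring
    nlinarith [hGlb]
end

section
/- Suppose f : B × ℝ → ℝ is continuous and for each x ∈ B the map t ↦ f(x,t)/|t|^{q-1} is increasing on ℝ∖{0}, with F(x,t) = ∫₀ᵗ f(x,s) ds. Then for each x ∈ B, the function t ↦ t·f(x,t) − q·F(x,t) is increasing for t > 0 and decreasing for t < 0. -/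
/-!
For `0 < a < b` put `K = f b / b ^ (q - 1)`. Monotonicity of `f t / t ^ (q - 1)` gives
`f ≤ K s ^ (q - 1)` on `[a, b]`, hence `q ∫_a^b f ≤ K (b ^ q - a ^ q)`, while `b f b = K b ^ q`
and `a f a < K a ^ q`; so `t f t - q F t` increases from `a` to `b`. The negative half-line is
reduced to the positive one through `t ↦ -f (-t)`.
-/

open Real Set intervalIntegral

lemma mul_integral_rpow_sub_one {q : ℝ} (hq : 0 < q) (a b : ℝ) :
    q * ∫ s in a..b, s ^ (q - 1) = b ^ q - a ^ q := by
  rw [integral_rpow (Or.inl (by linarith)), sub_add_cancel]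
  field_simp

lemma mul_eq_div_rpow_mul_rpow (q : ℝ) {t : ℝ} (ht : 0 < t) (y : ℝ) :
    t * y = y / t ^ (q - 1) * t ^ q := by
  rw [rpow_sub ht, rpow_one]
  field_simp

lemma strictMonoOn_mul_sub_mul_integral {q : ℝ} (hq : 0 < q) {f : ℝ → ℝ} (hf : Continuous f)
    (hmono : StrictMonoOn (fun t => f t / t ^ (q - 1)) (Ioi 0)) :
    StrictMonoOn (fun t => t * f t - q * ∫ s in (0:ℝ)..t, f s) (Ioi 0) := by
  intro a (ha : 0 < a) b (hb : 0 < b) hab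
  set K := f b / b ^ (q - 1)
  have hle : ∀ s ∈ Icc a b, f s ≤ K * s ^ (q - 1) := fun s hs => by
    have hs0 : 0 < s := ha.trans_le hs.1
    rw [← div_le_iff₀ (rpow_pos_of_pos hs0 _)]
    exact hmono.monotoneOn hs0 hb hs.2
  have hint : q * ∫ s in a..b, f s ≤ K * (b ^ q - a ^ q) := by
    rw [← mul_integral_rpow_sub_one hq, mul_left_comm]
    refine mul_le_mul_of_nonneg_left ?_ hq.le
    have hcont : ContinuousOn (fun s => K * s ^ (q - 1)) (uIcc a b) := fun s hs => by
      rw [uIcc_of_le hab.le] at hs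
      exact (continuousAt_const.mul
        (continuousAt_rpow_const _ _ (Or.inl (ha.trans_le hs.1).ne'))).continuousWithinAt
    rw [← integral_const_mul]
    exact integral_mono_on hab.le (hf.intervalIntegrable a b) hcont.intervalIntegrable hle
  have hsplit : (∫ s in (0:ℝ)..b, f s) - ∫ s in (0:ℝ)..a, f s = ∫ s in a..b, f s :=
    integral_interval_sub_left (hf.intervalIntegrable 0 b) (hf.intervalIntegrable 0 a)
  have hb_eq : b * f b = K * b ^ q := mul_eq_div_rpow_mul_rpow q hb (f b)
  have ha_lt : a * f a < K * a ^ q := by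
    rw [mul_eq_div_rpow_mul_rpow q ha (f a)]
    exact mul_lt_mul_of_pos_right (hmono ha hb hab) (rpow_pos_of_pos ha q)
  linear_combination hint + ha_lt - hb_eq + q * hsplit

lemma integral_neg_comp_neg (f : ℝ → ℝ) (t : ℝ) :
    ∫ s in (0:ℝ)..t, -f (-s) = ∫ s in (0:ℝ)..-t, f s := by
  rw [intervalIntegral.integral_neg, integral_comp_neg, neg_zero, integral_symm, neg_neg]

lemma strictAntiOn_mul_sub_mul_integral {q : ℝ} (hq : 0 < q) {f : ℝ → ℝ} (hf : Continuous f)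
    (hmono : StrictMonoOn (fun t => f t / |t| ^ (q - 1)) (Iio 0)) :
    StrictAntiOn (fun t => t * f t - q * ∫ s in (0:ℝ)..t, f s) (Iio 0) := by
  have hreflect : StrictMonoOn (fun t => t * -f (-t) - q * ∫ s in (0:ℝ)..t, -f (-s)) (Ioi 0) :=
    strictMonoOn_mul_sub_mul_integral hq (hf.comp continuous_neg).neg
      fun t (ht : 0 < t) s (hs : 0 < s) hts => by
        have := hmono (neg_lt_zero.2 hs) (neg_lt_zero.2 ht) (neg_lt_neg hts)
        simp only [abs_neg, abs_of_pos ht, abs_of_pos hs] at this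
        simpa only [neg_div, neg_lt_neg_iff] using this
  intro a (ha : a < 0) b (hb : b < 0) hab
  have := hreflect (neg_pos.2 hb) (neg_pos.2 ha) (neg_lt_neg hab)
  simp only [integral_neg_comp_neg, neg_neg] at this
  linarith

theorem tf_sub_qF_monotone
    (q : ℝ) (hq : 4 < q)
    (f : EuclideanSpace ℝ (Fin 4) → ℝ → ℝ)
    (hf : Continuous (Function.uncurry f))
    (F : EuclideanSpace ℝ (Fin 4) → ℝ → ℝ)
    (hF : ∀ x t, F x t = ∫ s in (0:ℝ)..t, f x s)
    (hmono : ∀ x ∈ Metric.ball (0 : EuclideanSpace ℝ (Fin 4)) 1,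
      ∀ t s : ℝ, t ≠ 0 → s ≠ 0 → t < s →
        f x t / |t| ^ (q - 1) < f x s / |s| ^ (q - 1)) :
    ∀ x ∈ Metric.ball (0 : EuclideanSpace ℝ (Fin 4)) 1,
      StrictMonoOn (fun t => t * f x t - q * F x t) (Set.Ioi (0:ℝ)) ∧
      StrictAntiOn (fun t => t * f x t - q * F x t) (Set.Iio (0:ℝ)) := by
  intro x hx
  have hq0 : 0 < q := by linarith
  have hfx : Continuous (f x) := hf.comp (continuous_const.prodMk continuous_id)
  simp only [hF]
  refine ⟨strictMonoOn_mul_sub_mul_integral hq0 hfx fun t (ht : 0 < t) s (hs : 0 < s) hts => ?_,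
    strictAntiOn_mul_sub_mul_integral hq0 hfx fun t (ht : t < 0) s (hs : s < 0) hts =>
      hmono x hx t s ht.ne hs.ne hts⟩
  simpa only [abs_of_pos ht, abs_of_pos hs] using hmono x hx t s ht.ne' hs.ne' hts
end
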